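/- arXiv:1510.02628 — 2 statements merged into one kernel-verified Lean document; each statement's English description precedes it below -/
import Mathlib

section
/- Let n ≥ 3 and let ℛ_n be the ℚ-algebra presented by generators Y_{ij}^k, T_i^{jk}, and (T_i^{jk})⁻¹ for all triples of distinct i,j,k ∈ [n], subject to: all relations of the presentation of 𝒬_n among the Y's (namely Y_{ij}^k Y_{ji}^k = 1, Y_{ij}^k Y_{jk}^i Y_{ki}^j = 1 for distinct i,j,k; Y_{ij}^ℓ Y_{jk}^ℓ Y_{ki}^ℓ = 1 for distinct i,j,k,ℓ; Y_{iℓ}^j = Y_{ij}^k Y_{jℓ}^i + Y_{iℓ}^k for cyclic (i,j,k,ℓ)); the invertibility relations T_i^{jk}·(T_i^{jk})⁻¹ = (T_i^{jk})⁻¹·T_i^{jk} = 1; (i) T_i^{jk} = T_i^{kj} for all distinct i,j,k; (ii) T_i^{jℓ} = T_i^{jk} + T_i^{kℓ} for all cyclic quadruples (i,j,k,ℓ); (iii) Y_{ji}^k T_i^{jk} = Y_{ji}^ℓ T_i^{jℓ} for all distinct i,j,k,ℓ. Then the assignments Y_{ij}^k ↦ x_{ki}⁻¹x_{kj} and T_i^{jk}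 ↦ x_{ji}⁻¹x_{jk}x_{ik}⁻¹ define a ℚ-algebra isomorphism from ℛ_n onto 𝒜_n. -/
/-!
Every defining relation of `ℛ_n` follows in `𝒜_n` from the triangle and exchange
relations, so `Y ↦ y`, `T ↦ T` defines `ℛ_n → 𝒜_n`. Conversely, since `n ≥ 3` every pair
`a ≠ b` has a third vertex `c`, and we send `x_{ab} ↦ (T_a^{bc})⁻¹ Y_{ab}^c` and
`x_{ab}⁻¹ ↦ Y_{ba}^c T_a^{bc}`; relation (iii) makes this independent of `c`. Using that
freedom, the triangle relation of `𝒜_n` becomes the symmetry (i) of `T⁻¹` and the exchange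
relation becomes the `Y`-exchange relation. Both composites fix the generators.
-/

open scoped Classical

noncomputable section

namespace NCPolygon

/-- Cyclic successor on `Fin n` (the vertices of the `n`-gon in cyclic order). -/
def csucc {n : ℕ} (i : Fin n) : Fin n :=
  ⟨(i.1 + 1) % n, Nat.mod_lt _ (Nat.lt_of_le_of_lt (Nat.zero_le _) i.isLt)⟩

/-- Cyclic predecessor on `Fin n`. -/
def cpred {n : ℕ} (i : Fin n) : Fin n :=
  ⟨(i.1 + (n - 1)) % n, Nat.mod_lt _ (Nat.lt_of_le_of_lt (Nat.zero_le _) i.isLt)⟩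

/-- A list of elements of `Fin n` is *cyclic* if its entries are distinct and some
cyclic rotation of it is strictly increasing. -/
def IsCyclicSeq {n : ℕ} (l : List (Fin n)) : Prop :=
  l.Nodup ∧ ∃ k : ℕ, (l.rotate k).Pairwise (· < ·)

/-- The pair `(i,k)` crosses `(j,l)` iff `(i,j,k,l)` is cyclic. -/
def Crosses {n : ℕ} (p q : Fin n × Fin n) : Prop :=
  IsCyclicSeq [p.1, q.1, p.2, q.2]

def NonCrossing {n : ℕ} (Δ : Set (Fin n × Fin n)) : Prop :=
  (∀ p ∈ Δ, p.1 ≠ p.2) ∧ ∀ p ∈ Δ, ∀ q ∈ Δ, ¬ Crosses p q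

/-- A triangulation of the `n`-gon: a maximal crossing-free set of (directed) chords. -/
def IsTriangulation {n : ℕ} (Δ : Set (Fin n × Fin n)) : Prop :=
  NonCrossing Δ ∧ ∀ Δ' : Set (Fin n × Fin n), NonCrossing Δ' → Δ ⊆ Δ' → Δ' = Δ

/-! ### The noncommutative polygon algebra `𝒜_n` -/

abbrev OffD (n : ℕ) := {p : Fin n × Fin n // p.1 ≠ p.2}

abbrev AGen (n : ℕ) := OffD n ⊕ OffD n

def xF {n : ℕ} (i j : Fin n) : FreeAlgebra ℚ (AGen n) :=
  if h : i ≠ j then FreeAlgebra.ι ℚ (Sum.inl ⟨(i, j), h⟩) else 1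

def xiF {n : ℕ} (i j : Fin n) : FreeAlgebra ℚ (AGen n) :=
  if h : i ≠ j then FreeAlgebra.ι ℚ (Sum.inr ⟨(i, j), h⟩) else 1

/-- The defining relations of `𝒜_n`: invertibility, triangle, and exchange relations. -/
inductive ARel (n : ℕ) : FreeAlgebra ℚ (AGen n) → FreeAlgebra ℚ (AGen n) → Prop
  | mul_inv {i j : Fin n} (h : i ≠ j) : ARel n (xF i j * xiF i j) 1
  | inv_mul {i j : Fin n} (h : i ≠ j) : ARel n (xiF i j * xF i j) 1
  | triangle {i j k : Fin n} (hij : i ≠ j) (hik : i ≠ k) (hjk : j ≠ k) :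
      ARel n (xF i j * xiF k j * xF k i) (xF i k * xiF j k * xF j i)
  | exchange {i j k l : Fin n} (h : IsCyclicSeq [i, j, k, l]) :
      ARel n (xF j l) (xF j k * xiF i k * xF i l + xF j i * xiF k i * xF k l)

/-- The noncommutative `n`-gon algebra `𝒜_n`. -/
abbrev NCPoly (n : ℕ) := RingQuot (ARel n)

/-- The generator `x_{ij} ∈ 𝒜_n` (junk value `1` when `i = j`). -/
def X {n : ℕ} (i j : Fin n) : NCPoly n :=
  RingQuot.mkAlgHom ℚ (ARel n) (xF i j)

/-- The generator `x_{ij}⁻¹ ∈ 𝒜_n`. -/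
def Xinv {n : ℕ} (i j : Fin n) : NCPoly n :=
  RingQuot.mkAlgHom ℚ (ARel n) (xiF i j)

/-- The noncommutative angle `T_i^{jk} = x_{ji}⁻¹ x_{jk} x_{ik}⁻¹ ∈ 𝒜_n`. -/
def Tang {n : ℕ} (i j k : Fin n) : NCPoly n := Xinv j i * X j k * Xinv i k

/-! ### Triangle groups -/

def tF {n : ℕ} (Δ : Set (Fin n × Fin n)) (i j : Fin n) : FreeGroup Δ :=
  if h : (i, j) ∈ Δ then FreeGroup.of (⟨(i, j), h⟩ : Δ) else 1

/-- The triangle relations of the triangle group `𝕋_Δ`. -/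
def triRels {n : ℕ} (Δ : Set (Fin n × Fin n)) : Set (FreeGroup Δ) :=
  { w | ∃ i j k : Fin n, i ≠ j ∧ i ≠ k ∧ j ≠ k ∧
      (i, j) ∈ Δ ∧ (j, i) ∈ Δ ∧ (i, k) ∈ Δ ∧ (k, i) ∈ Δ ∧ (j, k) ∈ Δ ∧ (k, j) ∈ Δ ∧
      w = tF Δ i j * (tF Δ k j)⁻¹ * tF Δ k i *
        (tF Δ i k * (tF Δ j k)⁻¹ * tF Δ j i)⁻¹ }

/-- The triangle group `𝕋_Δ` of a triangulation `Δ`. -/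
abbrev TriGroup {n : ℕ} (Δ : Set (Fin n × Fin n)) := PresentedGroup (triRels Δ)

/-- The generator `t_{ij} ∈ 𝕋_Δ` (junk value `1` when `(i,j) ∉ Δ`). -/
def tG {n : ℕ} (Δ : Set (Fin n × Fin n)) (i j : Fin n) : TriGroup Δ :=
  if h : (i, j) ∈ Δ then PresentedGroup.of (rels := triRels Δ) ⟨(i, j), h⟩ else 1

/-! ### The big triangle group `𝕋_n` -/

def btF {n : ℕ} (i j : Fin n) : FreeGroup (OffD n) :=
  if h : i ≠ j then FreeGroup.of (⟨(i, j), h⟩ : OffD n) else 1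

def bigRels (n : ℕ) : Set (FreeGroup (OffD n)) :=
  { w | ∃ i j k : Fin n, i ≠ j ∧ i ≠ k ∧ j ≠ k ∧
      w = btF i j * (btF k j)⁻¹ * btF k i * (btF i k * (btF j k)⁻¹ * btF j i)⁻¹ }

/-- The big triangle group `𝕋_n`. -/
abbrev BigTriGroup (n : ℕ) := PresentedGroup (bigRels n)

/-- The generator `t_{ij} ∈ 𝕋_n`. -/
def bigT {n : ℕ} (i j : Fin n) : BigTriGroup n :=
  if h : i ≠ j then PresentedGroup.of (rels := bigRels n) ⟨(i, j), h⟩ else 1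

/-! ### Distinguished subalgebras and subgroups -/

/-- `𝒜_Δ`: the subalgebra of `𝒜_n` generated by all `x_{ij}` together with the
`x_{ij}⁻¹` for `(i,j) ∈ Δ`. -/
def ADelta (n : ℕ) (Δ : Set (Fin n × Fin n)) : Subalgebra ℚ (NCPoly n) :=
  Algebra.adjoin ℚ
    ({a | ∃ i j : Fin n, i ≠ j ∧ a = X i j} ∪ {a | ∃ p ∈ Δ, a = Xinv p.1 p.2})

/-- `𝒬_n`: the subalgebra of `𝒜_n` generated by the `y_{ij}^k = x_{ki}⁻¹ x_{kj}`. -/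
def Qn (n : ℕ) : Subalgebra ℚ (NCPoly n) :=
  Algebra.adjoin ℚ
    {a : NCPoly n | ∃ i j k : Fin n, i ≠ j ∧ i ≠ k ∧ j ≠ k ∧ a = Xinv k i * X k j}

/-- `𝕌_Δ`: the subgroup of `𝕋_Δ` generated by the `u_{ij}^k = t_{ki}⁻¹ t_{kj}`. -/
def UDelta {n : ℕ} (Δ : Set (Fin n × Fin n)) : Subgroup (TriGroup Δ) :=
  Subgroup.closure
    {g | ∃ i j k : Fin n, (k, i) ∈ Δ ∧ (k, j) ∈ Δ ∧ g = (tG Δ k i)⁻¹ * tG Δ k j}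


/-- Triples of pairwise distinct indices. -/
abbrev Tri (n : ℕ) := {t : Fin n × Fin n × Fin n // t.1 ≠ t.2.1 ∧ t.1 ≠ t.2.2 ∧ t.2.1 ≠ t.2.2}

/-- Generators of `ℛ_n`: the `Y`'s, the `T`'s and the `T⁻¹`'s. -/
abbrev RGen (n : ℕ) := Tri n ⊕ Tri n ⊕ Tri n

def yR {n : ℕ} (i j k : Fin n) : FreeAlgebra ℚ (RGen n) :=
  if h : i ≠ j ∧ i ≠ k ∧ j ≠ k then FreeAlgebra.ι ℚ (Sum.inl ⟨(i, j, k), h⟩) else 1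

/-- The generator `T_i^{jk}` (as the triple `(i,j,k)`). -/
def tR {n : ℕ} (i j k : Fin n) : FreeAlgebra ℚ (RGen n) :=
  if h : i ≠ j ∧ i ≠ k ∧ j ≠ k then FreeAlgebra.ι ℚ (Sum.inr (Sum.inl ⟨(i, j, k), h⟩)) else 1

/-- The generator `(T_i^{jk})⁻¹`. -/
def tiR {n : ℕ} (i j k : Fin n) : FreeAlgebra ℚ (RGen n) :=
  if h : i ≠ j ∧ i ≠ k ∧ j ≠ k then FreeAlgebra.ι ℚ (Sum.inr (Sum.inr ⟨(i, j, k), h⟩)) else 1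

/-- The defining relations of `ℛ_n`. -/
inductive RRel (n : ℕ) : FreeAlgebra ℚ (RGen n) → FreeAlgebra ℚ (RGen n) → Prop
  | yInvol {i j k : Fin n} (h : i ≠ j ∧ i ≠ k ∧ j ≠ k) : RRel n (yR i j k * yR j i k) 1
  | yTri3 {i j k : Fin n} (h : i ≠ j ∧ i ≠ k ∧ j ≠ k) :
      RRel n (yR i j k * yR j k i * yR k i j) 1
  | yTri4 {i j k l : Fin n} (h : [i, j, k, l].Nodup) :
      RRel n (yR i j l * yR j k l * yR k i l) 1
  | yExch {i j k l : Fin n} (h : IsCyclicSeq [i, j, k, l]) :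
      RRel n (yR i l j) (yR i j k * yR j l i + yR i l k)
  | tMulInv {i j k : Fin n} (h : i ≠ j ∧ i ≠ k ∧ j ≠ k) : RRel n (tR i j k * tiR i j k) 1
  | tInvMul {i j k : Fin n} (h : i ≠ j ∧ i ≠ k ∧ j ≠ k) : RRel n (tiR i j k * tR i j k) 1
  | tSymm {i j k : Fin n} (h : i ≠ j ∧ i ≠ k ∧ j ≠ k) : RRel n (tR i j k) (tR i k j)
  | tAdd {i j k l : Fin n} (h : IsCyclicSeq [i, j, k, l]) :
      RRel n (tR i j l) (tR i j k + tR i k l)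
  | consist {i j k l : Fin n} (h : [i, j, k, l].Nodup) :
      RRel n (yR j i k * tR i j k) (yR j i l * tR i j l)

theorem mul_mul_cancel_left_of_mul_eq_one {M : Type*} [Monoid M] {a b : M} (h : a * b = 1)
    (c : M) : a * (b * c) = c := by
  rw [← mul_assoc, h, one_mul]

theorem nodup_four_iff {α : Type*} {a b c d : α} :
    [a, b, c, d].Nodup ↔ a ≠ b ∧ a ≠ c ∧ a ≠ d ∧ b ≠ c ∧ b ≠ d ∧ c ≠ d := by
  simp [not_or, and_assoc]

/-- `ℛ_n`. -/
abbrev RAlg (n : ℕ) := RingQuot (RRel n)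

section Generators

variable {n : ℕ}

def RY (i j k : Fin n) : RAlg n := RingQuot.mkAlgHom ℚ (RRel n) (yR i j k)

def RT (i j k : Fin n) : RAlg n := RingQuot.mkAlgHom ℚ (RRel n) (tR i j k)

def RTinv (i j k : Fin n) : RAlg n := RingQuot.mkAlgHom ℚ (RRel n) (tiR i j k)

lemma RAlg.algHom_ext {A : Type*} [Semiring A] [Algebra ℚ A] {φ ψ : RAlg n →ₐ[ℚ] A}
    (hY : ∀ i j k : Fin n, i ≠ j → i ≠ k → j ≠ k → φ (RY i j k) = ψ (RY i j k))
    (hT : ∀ i j k : Fin n, i ≠ j → i ≠ k → j ≠ k → φ (RT i j k) = ψ (RT i j k))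
    (hTinv : ∀ i j k : Fin n, i ≠ j → i ≠ k → j ≠ k →
      φ (RTinv i j k) = ψ (RTinv i j k)) :
    φ = ψ := by
  refine RingQuot.ringQuot_ext' ℚ _ _ (FreeAlgebra.hom_ext (funext ?_))
  rintro (⟨⟨i, j, k⟩, h⟩ | ⟨⟨i, j, k⟩, h⟩ | ⟨⟨i, j, k⟩, h⟩)
  · simpa [RY, yR, h] using hY i j k h.1 h.2.1 h.2.2
  · simpa [RT, tR, h] using hT i j k h.1 h.2.1 h.2.2
  · simpa [RTinv, tiR, h] using hTinv i j k h.1 h.2.1 h.2.2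

lemma NCPoly.algHom_ext {A : Type*} [Semiring A] [Algebra ℚ A] {φ ψ : NCPoly n →ₐ[ℚ] A}
    (hX : ∀ i j : Fin n, i ≠ j → φ (X i j) = ψ (X i j))
    (hXinv : ∀ i j : Fin n, i ≠ j → φ (Xinv i j) = ψ (Xinv i j)) : φ = ψ := by
  refine RingQuot.ringQuot_ext' ℚ _ _ (FreeAlgebra.hom_ext (funext ?_))
  rintro (⟨⟨i, j⟩, h⟩ | ⟨⟨i, j⟩, h⟩)
  · simpa [X, xF, h] using hX i j h
  · simpa [Xinv, xiF, h] using hXinv i j h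

end Generators

section PolygonAlgebra

variable {n : ℕ} {i j k l : Fin n}

lemma X_mul_Xinv (h : i ≠ j) : X i j * Xinv i j = 1 := by
  simpa only [X, Xinv, map_mul, map_one] using RingQuot.mkAlgHom_rel ℚ (ARel.mul_inv h)

lemma Xinv_mul_X (h : i ≠ j) : Xinv i j * X i j = 1 := by
  simpa only [X, Xinv, map_mul, map_one] using RingQuot.mkAlgHom_rel ℚ (ARel.inv_mul h)

lemma X_triangle (hij : i ≠ j) (hik : i ≠ k) (hjk : j ≠ k) :
    X i j * (Xinv k j * X k i) = X i k * (Xinv j k * X j i) := by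
  simpa only [X, Xinv, map_mul, mul_assoc] using
    RingQuot.mkAlgHom_rel ℚ (ARel.triangle hij hik hjk)

lemma X_exchange (h : IsCyclicSeq [i, j, k, l]) :
    X j l = X j k * (Xinv i k * X i l) + X j i * (Xinv k i * X k l) := by
  simpa only [X, Xinv, map_mul, map_add, mul_assoc] using
    RingQuot.mkAlgHom_rel ℚ (ARel.exchange h)

def Y (i j k : Fin n) : NCPoly n := Xinv k i * X k j

def TangInv (i j k : Fin n) : NCPoly n := X i k * Xinv j k * X j i

lemma Tang_symm (hij : i ≠ j) (hik : i ≠ k) (hjk : j ≠ k) : Tang i j k = Tang i k j := by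
  have triangle := congrArg (· * Xinv i j) (X_triangle hij.symm hjk hik)
  simp only [Tang, mul_assoc] at triangle ⊢
  calc Xinv j i * (X j k * Xinv i k)
      = Xinv j i * (X j k * (Xinv i k * (X i j * Xinv i j))) := by rw [X_mul_Xinv hij, mul_one]
    _ = Xinv j i * (X j i * (Xinv k i * (X k j * Xinv i j))) := by rw [← triangle]
    _ = Xinv k i * (X k j * Xinv i j) := mul_mul_cancel_left_of_mul_eq_one (Xinv_mul_X hij.symm) _

lemma Tang_mul_TangInv (hij : i ≠ j) (hik : i ≠ k) (hjk : j ≠ k) :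
    Tang i j k * TangInv i j k = 1 := by
  simp only [Tang, TangInv, mul_assoc]
  rw [mul_mul_cancel_left_of_mul_eq_one (Xinv_mul_X hik),
    mul_mul_cancel_left_of_mul_eq_one (X_mul_Xinv hjk), Xinv_mul_X hij.symm]

lemma TangInv_mul_Tang (hij : i ≠ j) (hik : i ≠ k) (hjk : j ≠ k) :
    TangInv i j k * Tang i j k = 1 := by
  simp only [Tang, TangInv, mul_assoc]
  rw [mul_mul_cancel_left_of_mul_eq_one (X_mul_Xinv hij.symm),
    mul_mul_cancel_left_of_mul_eq_one (Xinv_mul_X hjk), X_mul_Xinv hik]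

lemma Tang_add (h : IsCyclicSeq [i, j, k, l]) : Tang i j l = Tang i j k + Tang i k l := by
  obtain ⟨hij, -, hil, -, -, -⟩ := nodup_four_iff.mp h.1
  simp only [Tang, mul_assoc]
  rw [X_exchange h, add_mul]
  simp only [mul_assoc]
  rw [X_mul_Xinv hil, mul_one, mul_add, mul_mul_cancel_left_of_mul_eq_one (Xinv_mul_X hij.symm)]

lemma Y_mul_Y_swap (hik : i ≠ k) (hjk : j ≠ k) : Y i j k * Y j i k = 1 := by
  simp only [Y, mul_assoc]
  rw [mul_mul_cancel_left_of_mul_eq_one (X_mul_Xinv hjk.symm), Xinv_mul_X hik.symm]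

lemma Y_mul_Y_mul_Y_rotate (hij : i ≠ j) (hik : i ≠ k) (hjk : j ≠ k) :
    Y i j k * Y j k i * Y k i j = 1 := by
  have triangle := congrArg (· * (Xinv j k * X j i)) (X_triangle hjk.symm hik.symm hij.symm)
  simp only [Y, mul_assoc] at triangle ⊢
  rw [triangle, mul_mul_cancel_left_of_mul_eq_one (X_mul_Xinv hjk), Xinv_mul_X hij.symm, mul_one,
    Xinv_mul_X hik.symm]

lemma Y_mul_Y_mul_Y (hil : i ≠ l) (hjl : j ≠ l) (hkl : k ≠ l) :
    Y i j l * Y j k l * Y k i l = 1 := by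
  simp only [Y, mul_assoc]
  rw [mul_mul_cancel_left_of_mul_eq_one (X_mul_Xinv hjl.symm),
    mul_mul_cancel_left_of_mul_eq_one (X_mul_Xinv hkl.symm), Xinv_mul_X hil.symm]

lemma Y_exchange (h : IsCyclicSeq [i, j, k, l]) : Y i l j = Y i j k * Y j l i + Y i l k := by
  obtain ⟨hij, hik, -, hjk, -, -⟩ := nodup_four_iff.mp h.1
  have symm := congrArg (· * X i l) (Tang_symm hij hik hjk)
  simp only [Tang, Y, mul_assoc] at symm ⊢
  rw [X_exchange h, mul_add, symm, mul_mul_cancel_left_of_mul_eq_one (Xinv_mul_X hij.symm)]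

/-- The right-hand side does not depend on `k`: this is relation (iii). -/
lemma Y_mul_Tang (hij : i ≠ j) (hik : i ≠ k) (hjk : j ≠ k) :
    Y j i k * Tang i j k = Xinv i j := by
  rw [Tang_symm hij hik hjk]
  simp only [Y, Tang, mul_assoc]
  rw [mul_mul_cancel_left_of_mul_eq_one (X_mul_Xinv hik.symm),
    mul_mul_cancel_left_of_mul_eq_one (Xinv_mul_X hjk.symm)]

lemma TangInv_mul_Y (hij : i ≠ j) (hik : i ≠ k) (hjk : j ≠ k) :
    TangInv i j k * Y i j k = X i j := by
  simp only [TangInv, Y, mul_assoc]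
  rw [X_triangle hij.symm hjk hik, mul_mul_cancel_left_of_mul_eq_one (Xinv_mul_X hjk),
    mul_mul_cancel_left_of_mul_eq_one (X_mul_Xinv hik)]

end PolygonAlgebra

section ToNCPoly

variable {n : ℕ} {i j k : Fin n}

def toNCPolyGen : RGen n → NCPoly n :=
  Sum.elim (fun t => Y t.1.1 t.1.2.1 t.1.2.2)
    (Sum.elim (fun t => Tang t.1.1 t.1.2.1 t.1.2.2) (fun t => TangInv t.1.1 t.1.2.1 t.1.2.2))

lemma lift_toNCPolyGen_yR (h : i ≠ j ∧ i ≠ k ∧ j ≠ k) :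
    FreeAlgebra.lift ℚ toNCPolyGen (yR i j k) = Y i j k := by
  simp [yR, h, toNCPolyGen]

lemma lift_toNCPolyGen_tR (h : i ≠ j ∧ i ≠ k ∧ j ≠ k) :
    FreeAlgebra.lift ℚ toNCPolyGen (tR i j k) = Tang i j k := by
  simp [tR, h, toNCPolyGen]

lemma lift_toNCPolyGen_tiR (h : i ≠ j ∧ i ≠ k ∧ j ≠ k) :
    FreeAlgebra.lift ℚ toNCPolyGen (tiR i j k) = TangInv i j k := by
  simp [tiR, h, toNCPolyGen]

lemma lift_toNCPolyGen_eq_of_rrel ⦃a b : FreeAlgebra ℚ (RGen n)⦄ (hab : RRel n a b) :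
    FreeAlgebra.lift ℚ toNCPolyGen a = FreeAlgebra.lift ℚ toNCPolyGen b := by
  cases hab with
  | yInvol h =>
    rw [map_mul, map_one, lift_toNCPolyGen_yR h, lift_toNCPolyGen_yR ⟨h.1.symm, h.2.2, h.2.1⟩]
    exact Y_mul_Y_swap h.2.1 h.2.2
  | yTri3 h =>
    obtain ⟨hij, hik, hjk⟩ := h
    rw [map_mul, map_mul, map_one, lift_toNCPolyGen_yR ⟨hij, hik, hjk⟩,
      lift_toNCPolyGen_yR ⟨hjk, hij.symm, hik.symm⟩,
      lift_toNCPolyGen_yR ⟨hik.symm, hjk.symm, hij⟩]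
    exact Y_mul_Y_mul_Y_rotate hij hik hjk
  | yTri4 h =>
    obtain ⟨hij, hik, hil, hjk, hjl, hkl⟩ := nodup_four_iff.mp h
    rw [map_mul, map_mul, map_one, lift_toNCPolyGen_yR ⟨hij, hil, hjl⟩,
      lift_toNCPolyGen_yR ⟨hjk, hjl, hkl⟩, lift_toNCPolyGen_yR ⟨hik.symm, hkl, hil⟩]
    exact Y_mul_Y_mul_Y hil hjl hkl
  | yExch h =>
    obtain ⟨hij, hik, hil, hjk, hjl, hkl⟩ := nodup_four_iff.mp h.1
    rw [map_add, map_mul, lift_toNCPolyGen_yR ⟨hil, hij, hjl.symm⟩,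
      lift_toNCPolyGen_yR ⟨hij, hik, hjk⟩, lift_toNCPolyGen_yR ⟨hjl, hij.symm, hil.symm⟩,
      lift_toNCPolyGen_yR ⟨hil, hik, hkl.symm⟩]
    exact Y_exchange h
  | tMulInv h =>
    rw [map_mul, map_one, lift_toNCPolyGen_tR h, lift_toNCPolyGen_tiR h]
    exact Tang_mul_TangInv h.1 h.2.1 h.2.2
  | tInvMul h =>
    rw [map_mul, map_one, lift_toNCPolyGen_tR h, lift_toNCPolyGen_tiR h]
    exact TangInv_mul_Tang h.1 h.2.1 h.2.2
  | tSymm h =>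
    rw [lift_toNCPolyGen_tR h, lift_toNCPolyGen_tR ⟨h.2.1, h.1, h.2.2.symm⟩]
    exact Tang_symm h.1 h.2.1 h.2.2
  | tAdd h =>
    obtain ⟨hij, hik, hil, hjk, hjl, hkl⟩ := nodup_four_iff.mp h.1
    rw [map_add, lift_toNCPolyGen_tR ⟨hij, hil, hjl⟩, lift_toNCPolyGen_tR ⟨hij, hik, hjk⟩,
      lift_toNCPolyGen_tR ⟨hik, hil, hkl⟩]
    exact Tang_add h
  | consist h =>
    obtain ⟨hij, hik, hil, hjk, hjl, hkl⟩ := nodup_four_iff.mp h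
    rw [map_mul, map_mul, lift_toNCPolyGen_yR ⟨hij.symm, hjk, hik⟩,
      lift_toNCPolyGen_tR ⟨hij, hik, hjk⟩, lift_toNCPolyGen_yR ⟨hij.symm, hjl, hil⟩,
      lift_toNCPolyGen_tR ⟨hij, hil, hjl⟩, Y_mul_Tang hij hik hjk, Y_mul_Tang hij hil hjl]

variable (n) in
def toNCPoly : RAlg n →ₐ[ℚ] NCPoly n :=
  RingQuot.liftAlgHom ℚ ⟨FreeAlgebra.lift ℚ toNCPolyGen, lift_toNCPolyGen_eq_of_rrel⟩

lemma toNCPoly_RY (hij : i ≠ j) (hik : i ≠ k) (hjk : j ≠ k) :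
    toNCPoly n (RY i j k) = Y i j k :=
  (RingQuot.liftAlgHom_mkAlgHom_apply ..).trans (lift_toNCPolyGen_yR ⟨hij, hik, hjk⟩)

lemma toNCPoly_RT (hij : i ≠ j) (hik : i ≠ k) (hjk : j ≠ k) :
    toNCPoly n (RT i j k) = Tang i j k :=
  (RingQuot.liftAlgHom_mkAlgHom_apply ..).trans (lift_toNCPolyGen_tR ⟨hij, hik, hjk⟩)

lemma toNCPoly_RTinv (hij : i ≠ j) (hik : i ≠ k) (hjk : j ≠ k) :
    toNCPoly n (RTinv i j k) = TangInv i j k :=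
  (RingQuot.liftAlgHom_mkAlgHom_apply ..).trans (lift_toNCPolyGen_tiR ⟨hij, hik, hjk⟩)

end ToNCPoly

section RAlgRelations

variable {n : ℕ} {i j k l : Fin n}

lemma RY_mul_RY_swap (hij : i ≠ j) (hik : i ≠ k) (hjk : j ≠ k) : RY i j k * RY j i k = 1 := by
  simpa only [RY, map_mul, map_one] using
    RingQuot.mkAlgHom_rel ℚ (RRel.yInvol (n := n) ⟨hij, hik, hjk⟩)

lemma RY_mul_RY_mul_RY_rotate (hij : i ≠ j) (hik : i ≠ k) (hjk : j ≠ k) :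
    RY i j k * RY j k i * RY k i j = 1 := by
  simpa only [RY, map_mul, map_one] using
    RingQuot.mkAlgHom_rel ℚ (RRel.yTri3 (n := n) ⟨hij, hik, hjk⟩)

lemma RY_mul_RY_mul_RY (h : [i, j, k, l].Nodup) : RY i j l * RY j k l * RY k i l = 1 := by
  simpa only [RY, map_mul, map_one] using RingQuot.mkAlgHom_rel ℚ (RRel.yTri4 (n := n) h)

lemma RY_exchange (h : IsCyclicSeq [i, j, k, l]) : RY i l j = RY i j k * RY j l i + RY i l k := by
  simpa only [RY, map_mul, map_add] using RingQuot.mkAlgHom_rel ℚ (RRel.yExch (n := n) h)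

lemma RT_mul_RTinv (hij : i ≠ j) (hik : i ≠ k) (hjk : j ≠ k) :
    RT i j k * RTinv i j k = 1 := by
  simpa only [RT, RTinv, map_mul, map_one] using
    RingQuot.mkAlgHom_rel ℚ (RRel.tMulInv (n := n) ⟨hij, hik, hjk⟩)

lemma RTinv_mul_RT (hij : i ≠ j) (hik : i ≠ k) (hjk : j ≠ k) :
    RTinv i j k * RT i j k = 1 := by
  simpa only [RT, RTinv, map_mul, map_one] using
    RingQuot.mkAlgHom_rel ℚ (RRel.tInvMul (n := n) ⟨hij, hik, hjk⟩)

lemma RT_symm (hij : i ≠ j) (hik : i ≠ k) (hjk : j ≠ k) : RT i j k = RT i k j :=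
  RingQuot.mkAlgHom_rel ℚ (RRel.tSymm (n := n) ⟨hij, hik, hjk⟩)

lemma RY_mul_RT (h : [i, j, k, l].Nodup) : RY j i k * RT i j k = RY j i l * RT i j l := by
  simpa only [RY, RT, map_mul] using RingQuot.mkAlgHom_rel ℚ (RRel.consist (n := n) h)

lemma RTinv_symm (hij : i ≠ j) (hik : i ≠ k) (hjk : j ≠ k) : RTinv i j k = RTinv i k j :=
  left_inv_eq_right_inv (RTinv_mul_RT hij hik hjk)
    (by rw [RT_symm hij hik hjk]; exact RT_mul_RTinv hik hij hjk.symm)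

lemma RY_mul_RY_rotate (hij : i ≠ j) (hik : i ≠ k) (hjk : j ≠ k) :
    RY j i k * RY i k j = RY j k i :=
  left_inv_eq_right_inv (RY_mul_RY_mul_RY_rotate hij.symm hjk hik)
    (RY_mul_RY_swap hjk.symm hik.symm hij.symm)

lemma RY_mul_RY_trans (h : [i, j, k, l].Nodup) : RY i j l * RY j k l = RY i k l := by
  obtain ⟨-, hik, hil, -, -, hkl⟩ := nodup_four_iff.mp h
  exact left_inv_eq_right_inv (RY_mul_RY_mul_RY h) (RY_mul_RY_swap hik.symm hkl hil)

lemma RY_exchange' (h : IsCyclicSeq [i, j, k, l]) :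
    RY i l j = RY i k j * RY k l i + RY i l k := by
  obtain ⟨hij, hik, hil, hjk, hjl, hkl⟩ := nodup_four_iff.mp h.1
  rw [RY_exchange h, ← RY_mul_RY_rotate hik.symm hjk.symm hij, mul_assoc,
    RY_mul_RY_trans (nodup_four_iff.mpr ⟨hjk.symm, hkl, hik.symm, hjl, hij.symm, hil.symm⟩)]

end RAlgRelations

section Preimages

variable {n : ℕ} (hn : 3 ≤ n) {a b c : Fin n}

def third (a b : Fin n) : Fin n :=
  (ENat.exists_ne_ne_of_three_le (by simpa using hn) a b).choose

lemma third_ne_left (a b : Fin n) : third hn a b ≠ a :=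
  (ENat.exists_ne_ne_of_three_le (by simpa using hn) a b).choose_spec.1

lemma third_ne_right (a b : Fin n) : third hn a b ≠ b :=
  (ENat.exists_ne_ne_of_three_le (by simpa using hn) a b).choose_spec.2

/-- The preimage of `x_{ab}`; by `RX_eq` the choice of the third vertex does not matter. -/
def RX (a b : Fin n) : RAlg n := RTinv a b (third hn a b) * RY a b (third hn a b)

def RXinv (a b : Fin n) : RAlg n := RY b a (third hn a b) * RT a b (third hn a b)

lemma RXinv_eq (hab : a ≠ b) (hac : a ≠ c) (hbc : b ≠ c) :
    RXinv hn a b = RY b a c * RT a b c := by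
  by_cases hc : c = third hn a b
  · rw [hc, RXinv]
  · exact RY_mul_RT (nodup_four_iff.mpr ⟨hab, (third_ne_left hn a b).symm, hac,
      (third_ne_right hn a b).symm, hbc, Ne.symm hc⟩)

lemma RX_mul_RXinv (hab : a ≠ b) : RX hn a b * RXinv hn a b = 1 := by
  have hac := (third_ne_left hn a b).symm
  have hbc := (third_ne_right hn a b).symm
  rw [RX, RXinv, mul_assoc, mul_mul_cancel_left_of_mul_eq_one (RY_mul_RY_swap hab hac hbc),
    RTinv_mul_RT hab hac hbc]

lemma RXinv_mul_RX (hab : a ≠ b) : RXinv hn a b * RX hn a b = 1 := by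
  have hac := (third_ne_left hn a b).symm
  have hbc := (third_ne_right hn a b).symm
  rw [RX, RXinv, mul_assoc, mul_mul_cancel_left_of_mul_eq_one (RT_mul_RTinv hab hac hbc),
    RY_mul_RY_swap hab.symm hbc hac]

lemma RX_eq (hab : a ≠ b) (hac : a ≠ c) (hbc : b ≠ c) :
    RX hn a b = RTinv a b c * RY a b c := by
  refine left_inv_eq_right_inv (RX_mul_RXinv hn hab) ?_
  rw [RXinv_eq hn hab hac hbc, mul_assoc,
    mul_mul_cancel_left_of_mul_eq_one (RT_mul_RTinv hab hac hbc),
    RY_mul_RY_swap hab.symm hbc hac]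

lemma RXinv_mul_RX_eq_RY (hab : a ≠ b) (hac : a ≠ c) (hbc : b ≠ c) :
    RXinv hn a b * RX hn a c = RY b c a := by
  rw [RXinv_eq hn hab hac hbc, RX_eq hn hac hab hbc.symm, RT_symm hab hac hbc, mul_assoc,
    mul_mul_cancel_left_of_mul_eq_one (RT_mul_RTinv hac hab hbc.symm)]
  exact RY_mul_RY_rotate hab hac hbc

lemma RX_eq_RX_mul_RY (hab : a ≠ b) (hac : a ≠ c) (hbc : b ≠ c) :
    RX hn a c = RX hn a b * RY b c a := by
  rw [← RXinv_mul_RX_eq_RY hn hab hac hbc, ← mul_assoc, RX_mul_RXinv hn hab, one_mul]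

lemma RX_mul_RXinv_mul_RX (hab : a ≠ b) (hac : a ≠ c) (hbc : b ≠ c) :
    RX hn a b * RXinv hn c b * RX hn c a = RTinv a b c := by
  rw [RX_eq hn hab hac hbc, RXinv_eq hn hbc.symm hac.symm hab.symm,
    RX_eq hn hac.symm hbc.symm hab, RT_symm hbc.symm hac.symm hab.symm]
  simp only [mul_assoc]
  rw [mul_mul_cancel_left_of_mul_eq_one (RT_mul_RTinv hac.symm hbc.symm hab),
    ← mul_assoc (RY a b c), RY_mul_RY_mul_RY_rotate hab hac hbc, mul_one]

end Preimages

section OfNCPoly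

variable {n : ℕ} (hn : 3 ≤ n) {i j : Fin n}

def ofNCPolyGen : AGen n → RAlg n :=
  Sum.elim (fun p => RX hn p.1.1 p.1.2) (fun p => RXinv hn p.1.1 p.1.2)

lemma lift_ofNCPolyGen_xF (h : i ≠ j) :
    FreeAlgebra.lift ℚ (ofNCPolyGen hn) (xF i j) = RX hn i j := by
  simp [xF, h, ofNCPolyGen]

lemma lift_ofNCPolyGen_xiF (h : i ≠ j) :
    FreeAlgebra.lift ℚ (ofNCPolyGen hn) (xiF i j) = RXinv hn i j := by
  simp [xiF, h, ofNCPolyGen]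

lemma lift_ofNCPolyGen_eq_of_arel ⦃a b : FreeAlgebra ℚ (AGen n)⦄ (hab : ARel n a b) :
    FreeAlgebra.lift ℚ (ofNCPolyGen hn) a = FreeAlgebra.lift ℚ (ofNCPolyGen hn) b := by
  cases hab with
  | mul_inv h =>
    rw [map_mul, map_one, lift_ofNCPolyGen_xF hn h, lift_ofNCPolyGen_xiF hn h]
    exact RX_mul_RXinv hn h
  | inv_mul h =>
    rw [map_mul, map_one, lift_ofNCPolyGen_xF hn h, lift_ofNCPolyGen_xiF hn h]
    exact RXinv_mul_RX hn h
  | triangle hij hik hjk =>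
    rw [map_mul, map_mul, map_mul, map_mul, lift_ofNCPolyGen_xF hn hij,
      lift_ofNCPolyGen_xiF hn hjk.symm, lift_ofNCPolyGen_xF hn hik.symm,
      lift_ofNCPolyGen_xF hn hik, lift_ofNCPolyGen_xiF hn hjk, lift_ofNCPolyGen_xF hn hij.symm,
      RX_mul_RXinv_mul_RX hn hij hik hjk, RX_mul_RXinv_mul_RX hn hik hij hjk.symm]
    exact RTinv_symm hij hik hjk
  | @exchange i j k l h =>
    obtain ⟨hij, hik, hil, hjk, hjl, hkl⟩ := nodup_four_iff.mp h.1
    rw [map_add, map_mul, map_mul, map_mul, map_mul, lift_ofNCPolyGen_xF hn hjl,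
      lift_ofNCPolyGen_xF hn hjk, lift_ofNCPolyGen_xiF hn hik, lift_ofNCPolyGen_xF hn hil,
      lift_ofNCPolyGen_xF hn hij.symm, lift_ofNCPolyGen_xiF hn hik.symm,
      lift_ofNCPolyGen_xF hn hkl, mul_assoc, mul_assoc, RXinv_mul_RX_eq_RY hn hik hil hkl,
      RXinv_mul_RX_eq_RY hn hik.symm hkl hil, RX_eq_RX_mul_RY hn hij.symm hjk hik,
      RX_eq_RX_mul_RY hn hij.symm hjl hil, mul_assoc, ← mul_add, ← RY_exchange' h]

def ofNCPoly : NCPoly n →ₐ[ℚ] RAlg n :=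
  RingQuot.liftAlgHom ℚ
    ⟨FreeAlgebra.lift ℚ (ofNCPolyGen hn), lift_ofNCPolyGen_eq_of_arel hn⟩

lemma ofNCPoly_X (h : i ≠ j) : ofNCPoly hn (X i j) = RX hn i j :=
  (RingQuot.liftAlgHom_mkAlgHom_apply ..).trans (lift_ofNCPolyGen_xF hn h)

lemma ofNCPoly_Xinv (h : i ≠ j) : ofNCPoly hn (Xinv i j) = RXinv hn i j :=
  (RingQuot.liftAlgHom_mkAlgHom_apply ..).trans (lift_ofNCPolyGen_xiF hn h)

theorem ofNCPoly_comp_toNCPoly : (ofNCPoly hn).comp (toNCPoly n) = AlgHom.id ℚ (RAlg n) := by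
  refine RAlg.algHom_ext (fun i j k hij hik hjk => ?_) (fun i j k hij hik hjk => ?_)
    (fun i j k hij hik hjk => ?_)
  · rw [AlgHom.comp_apply, toNCPoly_RY hij hik hjk, Y, map_mul, ofNCPoly_Xinv hn hik.symm,
      ofNCPoly_X hn hjk.symm]
    exact RXinv_mul_RX_eq_RY hn hik.symm hjk.symm hij
  · rw [AlgHom.comp_apply, toNCPoly_RT hij hik hjk, Tang, map_mul, map_mul,
      ofNCPoly_Xinv hn hij.symm, ofNCPoly_X hn hjk, ofNCPoly_Xinv hn hik,
      RXinv_mul_RX_eq_RY hn hij.symm hjk hik, RXinv_eq hn hik hij hjk.symm, ← mul_assoc,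
      RY_mul_RY_swap hik hij hjk.symm, one_mul, ← RT_symm hij hik hjk]
    rfl
  · rw [AlgHom.comp_apply, toNCPoly_RTinv hij hik hjk, TangInv, map_mul, map_mul,
      ofNCPoly_X hn hik, ofNCPoly_Xinv hn hjk, ofNCPoly_X hn hij.symm,
      RX_mul_RXinv_mul_RX hn hik hij hjk.symm, ← RTinv_symm hij hik hjk]
    rfl

theorem toNCPoly_comp_ofNCPoly : (toNCPoly n).comp (ofNCPoly hn) = AlgHom.id ℚ (NCPoly n) := by
  refine NCPoly.algHom_ext (fun i j hij => ?_) (fun i j hij => ?_)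
  all_goals
    have hik := (third_ne_left hn i j).symm
    have hjk := (third_ne_right hn i j).symm
  · rw [AlgHom.comp_apply, ofNCPoly_X hn hij, RX, map_mul, toNCPoly_RTinv hij hik hjk,
      toNCPoly_RY hij hik hjk]
    exact TangInv_mul_Y hij hik hjk
  · rw [AlgHom.comp_apply, ofNCPoly_Xinv hn hij, RXinv, map_mul, toNCPoly_RY hij.symm hjk hik,
      toNCPoly_RT hij hik hjk]
    exact Y_mul_Tang hij hik hjk

end OfNCPoly

/-- The assignments `Y_{ij}^k ↦ x_{ki}⁻¹ x_{kj}`,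
`T_i^{jk} ↦ x_{ji}⁻¹ x_{jk} x_{ik}⁻¹` define an algebra isomorphism `ℛ_n ≅ 𝒜_n`. -/
theorem presented_An (n : ℕ) (hn : 3 ≤ n) :
    ∃ f : RingQuot (RRel n) →ₐ[ℚ] NCPoly n,
      (∀ i j k : Fin n, i ≠ j → i ≠ k → j ≠ k →
        f (RingQuot.mkAlgHom ℚ (RRel n) (yR i j k)) = Xinv k i * X k j ∧
        f (RingQuot.mkAlgHom ℚ (RRel n) (tR i j k)) = Xinv j i * X j k * Xinv i k) ∧
      Function.Bijective f :=
  ⟨toNCPoly n, fun _ _ _ hij hik hjk => ⟨toNCPoly_RY hij hik hjk, toNCPoly_RT hij hik hjk⟩,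
    (AlgEquiv.ofAlgHom _ _ (toNCPoly_comp_ofNCPoly hn) (ofNCPoly_comp_toNCPoly hn)).bijective⟩

end NCPolygon
end
end

section
/- Let n ≥ 3 and let Δ be a triangulation of [n]. The assignments t_{ij} ↦ t_{ij} for (i,j) ∈ Δ define a group homomorphism ĵ_Δ: 𝕋_Δ → 𝕋_n, and there exists a surjective group homomorphism π_Δ: 𝕋_n → 𝕋_Δ such that π_Δ ∘ ĵ_Δ is the identity of 𝕋_Δ. In particular, ĵ_Δ is an injective homomorphism 𝕋_Δ → 𝕋_n. -/
open scoped Classical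

noncomputable section

namespace NCPolygon

/-!
For a chord `(i, j) ∉ Δ`, let `u` and `v` be the neighbours of `i` in `Δ` just before and just
after `j`, the *fan* of `(i, j)`; then `(u, v) ∈ Δ`. Define `π_Δ(t_{ij}) = t_{ij}` for `(i, j) ∈ Δ`
and `π_Δ(t_{ij}) = t_{iu} t_{vu}⁻¹ π_Δ(t_{vj})` otherwise; the recursion terminates because
`(v, j)` crosses fewer chords of `Δ` than `(i, j)`. Unfolding from the other end of the chord
gives a mirror formula, and with both formulas the triangle relations of `𝕋_n` for the elements
`π_Δ(t_{ij})` follow by induction on the number of chords of `Δ` crossed by the sides of the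
triangle. So `π_Δ` is a homomorphism, and it is a retraction of `ĵ_Δ` because it fixes the
generators of `𝕋_Δ`.

Cyclic order is measured by `offset i x`, the distance from `i` forward to `x`: with offsets from
a common base vertex, crossing becomes a linear condition.
-/

variable {n : ℕ} {Δ : Set (Fin n × Fin n)}

def offset (a x : Fin n) : ℕ :=
  if a.val ≤ x.val then x.val - a.val else x.val + n - a.val

lemma offset_cases (a x : Fin n) :
    a.val ≤ x.val ∧ offset a x = x.val - a.val ∨
      x.val < a.val ∧ offset a x = x.val + n - a.val := by
  unfold offset
  split_ifs with h
  · exact Or.inl ⟨h, rfl⟩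
  · exact Or.inr ⟨by omega, rfl⟩

lemma offset_lt (a x : Fin n) : offset a x < n := by
  have := a.isLt; have := x.isLt
  rcases offset_cases a x with h | h <;> omega

@[simp]
lemma offset_self (a : Fin n) : offset a a = 0 := by
  simp [offset]

lemma offset_injective (a : Fin n) : Function.Injective (offset a) := by
  intro x y h
  have := a.isLt; have := x.isLt; have := y.isLt
  ext
  rcases offset_cases a x with hx | hx <;> rcases offset_cases a y with hy | hy <;> omega

lemma offset_pos {a x : Fin n} (h : x ≠ a) : 0 < offset a x :=
  Nat.pos_of_ne_zero fun h0 => h (offset_injective a (h0.trans (offset_self a).symm))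

lemma offset_rebase (i a x : Fin n) :
    offset i a ≤ offset i x ∧ offset a x = offset i x - offset i a ∨
      offset i x < offset i a ∧ offset a x = offset i x + n - offset i a := by
  have := i.isLt; have := a.isLt; have := x.isLt
  rcases offset_cases i a with ha | ha <;> rcases offset_cases i x with hx | hx <;>
    rcases offset_cases a x with h | h <;> omega

lemma offset_csucc (hn : 2 ≤ n) (i : Fin n) : offset i (csucc i) = 1 := by
  have := i.isLt
  have h : (csucc i).val = (i.val + 1) % n := rfl
  rcases Nat.lt_or_ge (i.val + 1) n with hi | hi
  · rw [Nat.mod_eq_of_lt hi] at h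
    rcases offset_cases i (csucc i) with h' | h' <;> omega
  · rw [show i.val + 1 = n by omega, Nat.mod_self] at h
    rcases offset_cases i (csucc i) with h' | h' <;> omega

lemma offset_cpred (hn : 2 ≤ n) (i : Fin n) : offset i (cpred i) = n - 1 := by
  have := i.isLt
  have h : (cpred i).val = (i.val + (n - 1)) % n := rfl
  rcases Nat.eq_zero_or_pos i.val with hi | hi
  · rw [hi, zero_add, Nat.mod_eq_of_lt (by omega)] at h
    rcases offset_cases i (cpred i) with h' | h' <;> omega
  · rw [Nat.mod_eq_sub_mod (by omega), Nat.mod_eq_of_lt (by omega)] at h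
    rcases offset_cases i (cpred i) with h' | h' <;> omega

lemma pairwise_lt_four {α : Type*} [Preorder α] {a b c d : α} :
    [a, b, c, d].Pairwise (· < ·) ↔ a < b ∧ b < c ∧ c < d := by
  rw [← List.isChain_iff_pairwise]
  simp only [List.isChain_cons_cons, List.isChain_singleton, and_true]

lemma isCyclicSeq_four_iff (a x b y : Fin n) :
    IsCyclicSeq [a, x, b, y] ↔
      0 < offset a x ∧ offset a x < offset a b ∧ offset a b < offset a y := by
  have := a.isLt; have := x.isLt; have := b.isLt; have := y.isLt
  have := offset_cases a x; have := offset_cases a b; have := offset_cases a y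
  constructor
  · rintro ⟨-, k, hk⟩
    rw [← List.rotate_mod] at hk
    have : k % 4 < 4 := Nat.mod_lt _ (by norm_num)
    interval_cases k % 4
    · have := pairwise_lt_four.1 (show [a, x, b, y].Pairwise (· < ·) from hk)
      omega
    · have := pairwise_lt_four.1 (show [x, b, y, a].Pairwise (· < ·) from hk)
      omega
    · have := pairwise_lt_four.1 (show [b, y, a, x].Pairwise (· < ·) from hk)
      omega
    · have := pairwise_lt_four.1 (show [y, a, x, b].Pairwise (· < ·) from hk)
      omega
  · intro h
    suffices ∃ k, ([a, x, b, y].rotate k).Pairwise (· < ·) from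
      ⟨List.nodup_rotate.1 this.choose_spec.nodup, this⟩
    rcases le_or_gt a.val x.val with c1 | c1 <;> rcases le_or_gt a.val b.val with c2 | c2 <;>
      rcases le_or_gt a.val y.val with c3 | c3
    all_goals first
      | exact ⟨0, pairwise_lt_four.2 (by omega)⟩
      | exact ⟨1, show [x, b, y, a].Pairwise (· < ·) from pairwise_lt_four.2 (by omega)⟩
      | exact ⟨2, show [b, y, a, x].Pairwise (· < ·) from pairwise_lt_four.2 (by omega)⟩
      | exact ⟨3, show [y, a, x, b].Pairwise (· < ·) from pairwise_lt_four.2 (by omega)⟩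

def CyclicallyOrdered (A X B Y : ℕ) : Prop :=
  A < X ∧ X < B ∧ B < Y ∨ X < B ∧ B < Y ∧ Y < A ∨ B < Y ∧ Y < A ∧ A < X ∨ Y < A ∧ A < X ∧ X < B

lemma crosses_iff (i : Fin n) {a b x y : Fin n} :
    Crosses (a, b) (x, y) ↔
      CyclicallyOrdered (offset i a) (offset i x) (offset i b) (offset i y) := by
  rw [Crosses, isCyclicSeq_four_iff]
  dsimp only
  have := offset_lt i a; have := offset_lt i b; have := offset_lt i x; have := offset_lt i y
  have := offset_rebase i a x; have := offset_rebase i a b; have := offset_rebase i a y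
  unfold CyclicallyOrdered
  omega

lemma crosses_swap_swap {a b x y : Fin n} : Crosses (b, a) (y, x) ↔ Crosses (a, b) (x, y) := by
  simp only [crosses_iff a, CyclicallyOrdered, offset_self]
  constructor <;> intro h <;> omega

namespace IsTriangulation

lemma ne_of_mem (hΔ : IsTriangulation Δ) {a b : Fin n} (h : (a, b) ∈ Δ) : a ≠ b :=
  hΔ.1.1 _ h

lemma not_crosses (hΔ : IsTriangulation Δ) {p q : Fin n × Fin n} (hp : p ∈ Δ) (hq : q ∈ Δ) :
    ¬Crosses p q :=
  hΔ.1.2 p hp q hq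

lemma mem_of_forall_not_crosses (hΔ : IsTriangulation Δ) {a b : Fin n} (hab : a ≠ b)
    (h : ∀ q ∈ Δ, ¬Crosses (a, b) q ∧ ¬Crosses q (a, b)) : (a, b) ∈ Δ := by
  have hself : ¬Crosses (a, b) (a, b) := fun hc => by simp [Crosses, IsCyclicSeq] at hc
  have hins : insert (a, b) Δ = Δ := by
    refine hΔ.2 _ ⟨?_, ?_⟩ (Set.subset_insert _ _)
    · rintro p (rfl | hp)
      exacts [hab, hΔ.1.1 p hp]
    · rintro p (rfl | hp) q (rfl | hq)
      exacts [hself, (h q hq).1, (h p hp).2, hΔ.not_crosses hp hq]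
  exact hins ▸ Set.mem_insert _ _

lemma swap_mem (hΔ : IsTriangulation Δ) {a b : Fin n} (h : (a, b) ∈ Δ) : (b, a) ∈ Δ := by
  refine hΔ.mem_of_forall_not_crosses (hΔ.ne_of_mem h).symm fun ⟨x, y⟩ hq => ?_
  have h₁ := hΔ.not_crosses h hq
  have h₂ := hΔ.not_crosses hq h
  simp only [crosses_iff a, CyclicallyOrdered, offset_self] at h₁ h₂ ⊢
  omega

lemma mem_of_offset_eq_one_or (hΔ : IsTriangulation Δ) {i x : Fin n} (hx : x ≠ i)
    (h : offset i x = 1 ∨ offset i x = n - 1) : (i, x) ∈ Δ := by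
  have := offset_lt i x
  refine hΔ.mem_of_forall_not_crosses hx.symm fun ⟨y, z⟩ _ => ?_
  have := offset_lt i y; have := offset_lt i z
  simp only [crosses_iff i, CyclicallyOrdered, offset_self]
  omega

lemma csucc_mem (hΔ : IsTriangulation Δ) (hn : 2 ≤ n) (i : Fin n) : (i, csucc i) ∈ Δ := by
  have h := offset_csucc hn i
  refine hΔ.mem_of_offset_eq_one_or (fun he => ?_) (Or.inl h)
  rw [he, offset_self] at h
  omega

lemma cpred_mem (hΔ : IsTriangulation Δ) (hn : 2 ≤ n) (i : Fin n) : (i, cpred i) ∈ Δ := by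
  have h := offset_cpred hn i
  refine hΔ.mem_of_offset_eq_one_or (fun he => ?_) (Or.inr h)
  rw [he, offset_self] at h
  omega

lemma two_le_offset_of_not_mem (hΔ : IsTriangulation Δ) {i j : Fin n} (hij : i ≠ j)
    (hnot : (i, j) ∉ Δ) : 2 ≤ offset i j ∧ offset i j + 2 ≤ n := by
  have := offset_pos hij.symm
  have := offset_lt i j
  have := mt (hΔ.mem_of_offset_eq_one_or hij.symm) hnot
  omega

end IsTriangulation

/-- `u` and `v` are the neighbours of `i` in `Δ` immediately before and after `j`, so that
`i u v` is the triangle of `Δ` that the chord `(i, j)` enters first. -/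
structure IsFan (Δ : Set (Fin n × Fin n)) (i j u v : Fin n) : Prop where
  left_mem : (i, u) ∈ Δ
  right_mem : (i, v) ∈ Δ
  base_mem : (u, v) ∈ Δ
  offset_left_pos : 0 < offset i u
  offset_left_lt : offset i u < offset i j
  offset_lt_right : offset i j < offset i v
  gap : ∀ x, (i, x) ∈ Δ → offset i x ≤ offset i u ∨ offset i v ≤ offset i x

namespace IsFan

variable {i j k u v : Fin n}

lemma not_mem (h : IsFan Δ i j u v) : (i, j) ∉ Δ := fun hj => by
  have := h.gap j hj; have := h.offset_left_lt; have := h.offset_lt_right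
  omega

lemma of_between (h : IsFan Δ i j u v) (hu : offset i u < offset i k)
    (hv : offset i k < offset i v) : IsFan Δ i k u v :=
  { h with offset_left_lt := hu, offset_lt_right := hv }

lemma unique {u' v' : Fin n} (h : IsFan Δ i j u v) (h' : IsFan Δ i j u' v') :
    u = u' ∧ v = v' := by
  have := h.gap u' h'.left_mem; have := h'.gap u h.left_mem
  have := h.gap v' h'.right_mem; have := h'.gap v h.right_mem
  have := h.offset_left_lt; have := h.offset_lt_right
  have := h'.offset_left_lt; have := h'.offset_lt_right
  exact ⟨offset_injective i (by omega), offset_injective i (by omega)⟩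

end IsFan

namespace IsTriangulation

/-- No chord of `Δ` can leave the region cut off by the spokes `(i, u)` and `(i, v)` without
crossing one of them. -/
lemma mem_of_adjacent_neighbors (hΔ : IsTriangulation Δ) {i u v : Fin n} (hu : (i, u) ∈ Δ)
    (hv : (i, v) ∈ Δ) (hu0 : 0 < offset i u) (huv : offset i u < offset i v)
    (gap : ∀ x, (i, x) ∈ Δ → offset i x ≤ offset i u ∨ offset i v ≤ offset i x) :
    (u, v) ∈ Δ := by
  have trapped : ∀ x y : Fin n, (x, y) ∈ Δ → offset i u < offset i x → offset i x < offset i v →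
      offset i u ≤ offset i y ∧ offset i y ≤ offset i v := by
    intro x y hxy hux hxv
    by_cases hyi : y = i
    · subst hyi
      have := gap x (hΔ.swap_mem hxy)
      omega
    · have := offset_pos hyi
      have h₁ := hΔ.not_crosses hu (hΔ.swap_mem hxy)
      have h₂ := hΔ.not_crosses hv hxy
      simp only [crosses_iff i, CyclicallyOrdered, offset_self] at h₁ h₂
      omega
  refine hΔ.mem_of_forall_not_crosses (fun he => by rw [he] at huv; omega) fun ⟨x, y⟩ hq => ?_
  have := trapped x y hq; have := trapped y x (hΔ.swap_mem hq)
  simp only [crosses_iff i, CyclicallyOrdered]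
  omega

lemma exists_isFan (hΔ : IsTriangulation Δ) {i j : Fin n} (hij : i ≠ j) (hnot : (i, j) ∉ Δ) :
    ∃ u v, IsFan Δ i j u v := by
  obtain ⟨hj2, hjn⟩ := hΔ.two_le_offset_of_not_mem hij hnot
  have hn : 2 ≤ n := by omega
  let before := Finset.univ.filter fun x => (i, x) ∈ Δ ∧ offset i x < offset i j
  let after := Finset.univ.filter fun x => (i, x) ∈ Δ ∧ offset i j < offset i x
  obtain ⟨u, hu, hu_max⟩ := before.exists_max_image (offset i) ⟨csucc i, by
    simp only [before, Finset.mem_filter, Finset.mem_univ, true_and, offset_csucc hn]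
    exact ⟨hΔ.csucc_mem hn i, by omega⟩⟩
  obtain ⟨v, hv, hv_min⟩ := after.exists_min_image (offset i) ⟨cpred i, by
    simp only [after, Finset.mem_filter, Finset.mem_univ, true_and, offset_cpred hn]
    exact ⟨hΔ.cpred_mem hn i, by omega⟩⟩
  simp only [before, after, Finset.mem_filter, Finset.mem_univ, true_and] at hu hv hu_max hv_min
  have gap : ∀ x, (i, x) ∈ Δ → offset i x ≤ offset i u ∨ offset i v ≤ offset i x := by
    intro x hx
    rcases lt_trichotomy (offset i x) (offset i j) with hc | hc | hc
    · exact Or.inl (hu_max x ⟨hx, hc⟩)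
    · exact absurd (offset_injective i hc ▸ hx) hnot
    · exact Or.inr (hv_min x ⟨hx, hc⟩)
  have hu0 := offset_pos (hΔ.ne_of_mem hu.1).symm
  exact ⟨u, v, hu.1, hv.1, hΔ.mem_of_adjacent_neighbors hu.1 hv.1 hu0 (by omega) gap,
    hu0, hu.2, hv.2, gap⟩

end IsTriangulation

namespace IsFan

variable {a b u v p q : Fin n}

/-- The fans of a missing chord at its two ends are nested. -/
lemma nested (h : IsFan Δ a b u v) (h' : IsFan Δ b a p q) (hΔ : IsTriangulation Δ) :
    offset a b < offset a p ∧ offset a p ≤ offset a v ∧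
      offset a u ≤ offset a q ∧ offset a q < offset a b := by
  have := h.offset_left_lt; have := h.offset_lt_right
  have := h'.offset_left_pos; have := h'.offset_left_lt; have := h'.offset_lt_right
  have := offset_pos (hΔ.ne_of_mem h'.left_mem).symm
  have := offset_lt a p; have := offset_lt a q; have := offset_lt a v
  have hba := offset_rebase a b a; have := offset_rebase a b p; have := offset_rebase a b q
  rw [offset_self] at hba
  have h₁ := hΔ.not_crosses h.base_mem h'.left_mem
  have h₂ := hΔ.not_crosses h.base_mem h'.right_mem
  simp only [crosses_iff a, CyclicallyOrdered] at h₁ h₂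
  omega

lemma between_of_not_between {c : Fin n} (h : IsFan Δ a b u v) (h' : IsFan Δ b a p q)
    (hΔ : IsTriangulation Δ) (hca : c ≠ a)
    (hc : ¬(offset a u ≤ offset a c ∧ offset a c ≤ offset a v)) :
    offset b p ≤ offset b c ∧ offset b c ≤ offset b q := by
  have := h.nested h' hΔ
  have := h.offset_left_lt; have := h.offset_lt_right
  have := offset_pos hca
  have := offset_lt a c; have := offset_lt a p; have := offset_lt a q; have := offset_lt a v
  have := offset_rebase a b c; have := offset_rebase a b p; have := offset_rebase a b q
  omega

end IsFan

def fan (Δ : Set (Fin n × Fin n)) (i j : Fin n) : Fin n × Fin n :=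
  if h : ∃ p : Fin n × Fin n, IsFan Δ i j p.1 p.2 then h.choose else (i, i)

lemma IsFan.fan_eq {i j u v : Fin n} (h : IsFan Δ i j u v) :
    fan Δ i j = (u, v) := by
  have hex : ∃ p : Fin n × Fin n, IsFan Δ i j p.1 p.2 := ⟨(u, v), h⟩
  obtain ⟨hu, hv⟩ := hex.choose_spec.unique h
  rw [fan, dif_pos hex]
  exact Prod.ext hu hv

def crossNum (Δ : Set (Fin n × Fin n)) (a b : Fin n) : ℕ :=
  {p ∈ Δ | Crosses (a, b) p ∨ Crosses (a, b) p.swap}.ncard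

lemma crossNum_comm (a b : Fin n) : crossNum Δ a b = crossNum Δ b a := by
  unfold crossNum
  congr 1
  ext ⟨x, y⟩
  refine and_congr_right fun _ => ?_
  rw [Prod.swap_prod_mk, ← crosses_swap_swap (a := b), ← crosses_swap_swap (a := b) (x := y)]
  exact or_comm

lemma IsTriangulation.crossNum_eq_zero_of_mem (hΔ : IsTriangulation Δ) {a b : Fin n}
    (h : (a, b) ∈ Δ) : crossNum Δ a b = 0 := by
  rw [crossNum, Set.ncard_eq_zero, Set.eq_empty_iff_forall_notMem]
  rintro ⟨x, y⟩ ⟨hq, hc | hc⟩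
  exacts [hΔ.not_crosses h hq hc, hΔ.not_crosses h (hΔ.swap_mem hq) hc]

lemma IsFan.crosses_of_crosses {i j u v x y : Fin n} (h : IsFan Δ i j u v)
    (hΔ : IsTriangulation Δ) (hxy : (x, y) ∈ Δ) (hc : Crosses (v, j) (x, y)) :
    Crosses (i, j) (x, y) := by
  have := h.offset_left_lt; have := h.offset_lt_right
  have := offset_lt i x; have := offset_lt i y
  by_cases hx : x = i
  · subst hx
    have := h.gap y hxy
    simp only [crosses_iff x, CyclicallyOrdered, offset_self] at hc
    omega
  have := offset_pos hx
  have hv := hΔ.not_crosses h.right_mem (hΔ.swap_mem hxy)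
  simp only [crosses_iff i, CyclicallyOrdered, offset_self] at hc hv ⊢
  omega

lemma IsFan.crossNum_lt {i j u v : Fin n} (h : IsFan Δ i j u v) (hΔ : IsTriangulation Δ) :
    crossNum Δ v j < crossNum Δ i j := by
  refine Set.ncard_lt_ncard ⟨?_, fun hsub => ?_⟩ (Set.toFinite _)
  · rintro ⟨x, y⟩ ⟨hq, hc | hc⟩
    exacts [⟨hq, Or.inl (h.crosses_of_crosses hΔ hq hc)⟩,
      ⟨hq, Or.inr (h.crosses_of_crosses hΔ (hΔ.swap_mem hq) hc)⟩]
  · have := h.offset_left_pos; have := h.offset_left_lt; have := h.offset_lt_right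
    have huv : Crosses (i, j) (u, v) := by
      simp only [crosses_iff i, CyclicallyOrdered, offset_self]
      omega
    obtain ⟨-, hc | hc⟩ := hsub ⟨h.base_mem, Or.inl huv⟩ <;>
      simp only [crosses_iff i, CyclicallyOrdered, Prod.swap_prod_mk] at hc <;> omega

section TriangleRel

variable {α G : Type*} [Group G]

def TriangleRel (s : α → α → G) (i j k : α) : Prop :=
  s i j * (s k j)⁻¹ * s k i = s i k * (s j k)⁻¹ * s j i

variable {s : α → α → G} {i j k : α}

lemma TriangleRel.symm (h : TriangleRel s i j k) : TriangleRel s i k j :=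
  Eq.symm h

lemma TriangleRel.swap (h : TriangleRel s i j k) : TriangleRel s j i k := by
  have hji : s j i = s j k * (s i k)⁻¹ * (s i j * (s k j)⁻¹ * s k i) := by
    rw [h]; group
  unfold TriangleRel
  rw [hji]
  group

end TriangleRel

lemma mk_tF (Δ : Set (Fin n × Fin n)) (a b : Fin n) :
    PresentedGroup.mk (triRels Δ) (tF Δ a b) = tG Δ a b := by
  unfold tF tG
  split_ifs <;> rfl

lemma mk_btF (a b : Fin n) : PresentedGroup.mk (bigRels n) (btF a b) = bigT a b := by
  unfold btF bigT
  split_ifs <;> rfl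

lemma IsTriangulation.triangleRel_tG (hΔ : IsTriangulation Δ)
    {i j k : Fin n} (hij : i ≠ j) (hik : i ≠ k) (hjk : j ≠ k) (hij' : (i, j) ∈ Δ)
    (hik' : (i, k) ∈ Δ) (hjk' : (j, k) ∈ Δ) : TriangleRel (tG Δ) i j k := by
  have h := PresentedGroup.one_of_mem (rels := triRels Δ) ⟨i, j, k, hij, hik, hjk, hij',
    hΔ.swap_mem hij', hik', hΔ.swap_mem hik', hjk', hΔ.swap_mem hjk', rfl⟩
  simp only [map_mul, map_inv, mk_tF] at h
  exact mul_inv_eq_one.mp h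

lemma triangleRel_bigT {i j k : Fin n} (hij : i ≠ j) (hik : i ≠ k) (hjk : j ≠ k) :
    TriangleRel bigT i j k := by
  have h := PresentedGroup.one_of_mem (rels := bigRels n) ⟨i, j, k, hij, hik, hjk, rfl⟩
  simp only [map_mul, map_inv, mk_btF] at h
  exact mul_inv_eq_one.mp h

/-- The image of `t_{ij}` under `π_Δ`. The guard on the crossing numbers always holds for a
triangulation (`IsFan.crossNum_lt`); it only makes the recursion well founded. -/
def retractGen (Δ : Set (Fin n × Fin n)) (i j : Fin n) : TriGroup Δ :=
  if (i, j) ∈ Δ then tG Δ i j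
  else if crossNum Δ (fan Δ i j).2 j < crossNum Δ i j then
    tG Δ i (fan Δ i j).1 * (tG Δ (fan Δ i j).2 (fan Δ i j).1)⁻¹ * retractGen Δ (fan Δ i j).2 j
  else 1
termination_by crossNum Δ i j

lemma retractGen_of_mem {i j : Fin n} (h : (i, j) ∈ Δ) : retractGen Δ i j = tG Δ i j := by
  rw [retractGen, if_pos h]

lemma IsFan.retractGen_eq {i j u v : Fin n} (h : IsFan Δ i j u v) (hΔ : IsTriangulation Δ) :
    retractGen Δ i j = tG Δ i u * (tG Δ v u)⁻¹ * retractGen Δ v j := by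
  rw [retractGen, if_neg h.not_mem, h.fan_eq, if_pos (h.crossNum_lt hΔ)]

namespace IsFan

variable {i j k u v : Fin n}

lemma retractGen_eq_of_le (h : IsFan Δ i j u v) (hΔ : IsTriangulation Δ)
    (huk : offset i u ≤ offset i k) (hkv : offset i k < offset i v) :
    retractGen Δ i k = tG Δ i u * (tG Δ v u)⁻¹ * retractGen Δ v k := by
  rcases huk.eq_or_lt with huk | huk
  · rw [offset_injective i huk.symm, retractGen_of_mem h.left_mem,
      retractGen_of_mem (hΔ.swap_mem h.base_mem)]
    group
  · exact (h.of_between huk hkv).retractGen_eq hΔ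

lemma retractGen_swap_eq {a b p q : Fin n} (h : IsFan Δ b a p q) (hΔ : IsTriangulation Δ) :
    retractGen Δ a b = retractGen Δ a q * (tG Δ p q)⁻¹ * tG Δ p b := by
  have hab : a ≠ b := by
    rintro rfl
    simpa using h.offset_left_lt
  obtain ⟨u, v, hf⟩ := hΔ.exists_isFan hab fun hm => h.not_mem (hΔ.swap_mem hm)
  obtain ⟨hbp, hpv, huq, hqb⟩ := hf.nested h hΔ
  have hvb : retractGen Δ v b = retractGen Δ v q * (tG Δ p q)⁻¹ * tG Δ p b := by
    rcases hpv.eq_or_lt with hpv | hpv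
    · rw [← offset_injective a hpv, retractGen_of_mem (hΔ.swap_mem h.left_mem),
        retractGen_of_mem h.base_mem]
      group
    · have := offset_lt a v; have := offset_lt a q
      have := offset_rebase a b p; have := offset_rebase a b v; have := offset_rebase a b q
      have hf' : IsFan Δ b v p q := h.of_between (by omega) (by omega)
      have := hf.crossNum_lt hΔ -- the measure decreases in the recursive call
      exact hf'.retractGen_swap_eq hΔ
  rw [hf.retractGen_eq hΔ, hvb, hf.retractGen_eq_of_le hΔ huq (by omega)]
  group
termination_by crossNum Δ a b

lemma retractGen_swap_eq_of_le (h : IsFan Δ i j u v) (hΔ : IsTriangulation Δ)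
    (huk : offset i u ≤ offset i k) (hkv : offset i k < offset i v) :
    retractGen Δ k i = retractGen Δ k v * (tG Δ u v)⁻¹ * tG Δ u i := by
  rcases huk.eq_or_lt with huk | huk
  · rw [offset_injective i huk.symm, retractGen_of_mem (hΔ.swap_mem h.left_mem),
      retractGen_of_mem h.base_mem]
    group
  · exact (h.of_between huk hkv).retractGen_swap_eq hΔ

lemma crossNum_le (h : IsFan Δ i j u v) (hΔ : IsTriangulation Δ)
    (huk : offset i u ≤ offset i k) (hkv : offset i k < offset i v) :
    crossNum Δ v k ≤ crossNum Δ i k := by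
  rcases huk.eq_or_lt with huk | huk
  · rw [offset_injective i huk.symm, hΔ.crossNum_eq_zero_of_mem (hΔ.swap_mem h.base_mem)]
    exact Nat.zero_le _
  · exact ((h.of_between huk hkv).crossNum_lt hΔ).le

/-- The triangle relation for `(i, j, k)` with `k` in the fan `(u, v)` of `(i, j)`: for `k = v`
it is the relation of the triangle `i u v` of `Δ`, otherwise it reduces to the relation for
`(v, j, k)`, whose sides cross fewer chords. -/
lemma triangleRel_retractGen_of_le (h : IsFan Δ i j u v) (hΔ : IsTriangulation Δ) (hjk : j ≠ k)
    (huk : offset i u ≤ offset i k) (hkv : offset i k ≤ offset i v) {N : ℕ}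
    (hN : crossNum Δ i j + crossNum Δ j k + crossNum Δ i k ≤ N)
    (ih : ∀ a b c, a ≠ b → a ≠ c → b ≠ c →
      crossNum Δ a b + crossNum Δ b c + crossNum Δ a c < N → TriangleRel (retractGen Δ) a b c) :
    TriangleRel (retractGen Δ) i j k := by
  have hjv := h.offset_lt_right
  unfold TriangleRel
  rw [h.retractGen_eq hΔ, h.retractGen_swap_eq hΔ]
  rcases hkv.lt_or_eq with hkv | hkv
  · have hvj : v ≠ j := fun he => by rw [he] at hjv; omega
    have hvk : v ≠ k := fun he => by rw [he] at hkv; omega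
    have := h.crossNum_lt hΔ
    have := h.crossNum_le hΔ huk hkv
    have hv := ih v j k hvj hvk hjk (by omega)
    rw [h.retractGen_eq_of_le hΔ huk hkv, h.retractGen_swap_eq_of_le hΔ huk hkv]
    calc _ = tG Δ i u * (tG Δ v u)⁻¹ *
            (retractGen Δ v j * (retractGen Δ k j)⁻¹ * retractGen Δ k v) *
            ((tG Δ u v)⁻¹ * tG Δ u i) := by group
      _ = tG Δ i u * (tG Δ v u)⁻¹ *
            (retractGen Δ v k * (retractGen Δ j k)⁻¹ * retractGen Δ j v) *
            ((tG Δ u v)⁻¹ * tG Δ u i) := by rw [hv]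
      _ = _ := by group
  · rw [offset_injective i hkv, retractGen_of_mem h.right_mem,
      retractGen_of_mem (hΔ.swap_mem h.right_mem)]
    have huv := hΔ.ne_of_mem h.base_mem
    have hiu := hΔ.ne_of_mem h.left_mem
    have hiv := hΔ.ne_of_mem h.right_mem
    calc _ = tG Δ i u * (tG Δ v u)⁻¹ * tG Δ v i := by group
      _ = tG Δ i v * (tG Δ u v)⁻¹ * tG Δ u i :=
          hΔ.triangleRel_tG hiu hiv huv h.left_mem h.right_mem h.base_mem
      _ = _ := by group

end IsFan

namespace IsTriangulation

lemma triangleRel_retractGen_of_not_mem (hΔ : IsTriangulation Δ) {N : ℕ}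
    (ih : ∀ a b c, a ≠ b → a ≠ c → b ≠ c →
      crossNum Δ a b + crossNum Δ b c + crossNum Δ a c < N → TriangleRel (retractGen Δ) a b c)
    {i j k : Fin n} (hij : i ≠ j) (hik : i ≠ k) (hjk : j ≠ k)
    (hN : crossNum Δ i j + crossNum Δ j k + crossNum Δ i k ≤ N) (hnot : (i, j) ∉ Δ) :
    TriangleRel (retractGen Δ) i j k := by
  obtain ⟨u, v, h⟩ := hΔ.exists_isFan hij hnot
  by_cases hk : offset i u ≤ offset i k ∧ offset i k ≤ offset i v
  · exact h.triangleRel_retractGen_of_le hΔ hjk hk.1 hk.2 hN ih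
  · obtain ⟨p, q, h'⟩ := hΔ.exists_isFan hij.symm fun hm => hnot (hΔ.swap_mem hm)
    have hk' := h.between_of_not_between h' hΔ hik.symm hk
    refine (h'.triangleRel_retractGen_of_le hΔ hik hk'.1 hk'.2 ?_ ih).swap
    have := crossNum_comm (Δ := Δ) i j
    omega

theorem triangleRel_retractGen (hΔ : IsTriangulation Δ) {i j k : Fin n} (hij : i ≠ j)
    (hik : i ≠ k) (hjk : j ≠ k) : TriangleRel (retractGen Δ) i j k := by
  induction hN : crossNum Δ i j + crossNum Δ j k + crossNum Δ i k
    using Nat.strong_induction_on generalizing i j k with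
  | _ N ih =>
  have ih' : ∀ a b c, a ≠ b → a ≠ c → b ≠ c →
      crossNum Δ a b + crossNum Δ b c + crossNum Δ a c < N → TriangleRel (retractGen Δ) a b c :=
    fun a b c hab hac hbc hlt => ih _ hlt hab hac hbc rfl
  have := crossNum_comm (Δ := Δ) j k
  by_cases hij' : (i, j) ∈ Δ
  swap
  · exact hΔ.triangleRel_retractGen_of_not_mem ih' hij hik hjk hN.le hij'
  by_cases hik' : (i, k) ∈ Δ
  swap
  · exact (hΔ.triangleRel_retractGen_of_not_mem ih' hik hij hjk.symm (by omega) hik').symm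
  by_cases hjk' : (j, k) ∈ Δ
  swap
  · have := crossNum_comm (Δ := Δ) i j
    have := crossNum_comm (Δ := Δ) i k
    exact (hΔ.triangleRel_retractGen_of_not_mem ih' hjk hij.symm hik.symm (by omega)
      hjk').swap.symm.swap.symm
  unfold TriangleRel
  simp only [retractGen_of_mem, hij', hik', hjk', hΔ.swap_mem hij', hΔ.swap_mem hik',
    hΔ.swap_mem hjk']
  exact hΔ.triangleRel_tG hij hik hjk hij' hik' hjk'

end IsTriangulation

lemma lift_tF {G : Type*} [Group G] (f : Δ → G) {a b : Fin n} (h : (a, b) ∈ Δ) :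
    FreeGroup.lift f (tF Δ a b) = f ⟨(a, b), h⟩ := by
  rw [tF, dif_pos h, FreeGroup.lift_apply_of]

lemma lift_btF {G : Type*} [Group G] (f : OffD n → G) {a b : Fin n} (h : a ≠ b) :
    FreeGroup.lift f (btF a b) = f ⟨(a, b), h⟩ := by
  rw [btF, dif_pos h, FreeGroup.lift_apply_of]

lemma lift_bigT_triRels (Δ : Set (Fin n × Fin n)) :
    ∀ r ∈ triRels Δ, FreeGroup.lift (fun d : Δ => bigT d.1.1 d.1.2) r = 1 := by
  rintro _ ⟨i, j, k, hij, hik, hjk, hij', hji', hik', hki', hjk', hkj', rfl⟩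
  simp only [map_mul, map_inv, lift_tF _ hij', lift_tF _ hji', lift_tF _ hik', lift_tF _ hki',
    lift_tF _ hjk', lift_tF _ hkj']
  exact mul_inv_eq_one.mpr (triangleRel_bigT hij hik hjk)

lemma IsTriangulation.lift_retractGen_bigRels (hΔ : IsTriangulation Δ) :
    ∀ r ∈ bigRels n, FreeGroup.lift (fun d : OffD n => retractGen Δ d.1.1 d.1.2) r = 1 := by
  rintro _ ⟨i, j, k, hij, hik, hjk, rfl⟩
  simp only [map_mul, map_inv, lift_btF _ hij, lift_btF _ hij.symm, lift_btF _ hik,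
    lift_btF _ hik.symm, lift_btF _ hjk, lift_btF _ hjk.symm]
  exact mul_inv_eq_one.mpr (hΔ.triangleRel_retractGen hij hik hjk)

/-- `ĵ_Δ`. -/
def embedHom (Δ : Set (Fin n × Fin n)) : TriGroup Δ →* BigTriGroup n :=
  PresentedGroup.toGroup (lift_bigT_triRels Δ)

/-- `π_Δ`. -/
def IsTriangulation.retractHom (hΔ : IsTriangulation Δ) : BigTriGroup n →* TriGroup Δ :=
  PresentedGroup.toGroup hΔ.lift_retractGen_bigRels

lemma embedHom_tG {i j : Fin n} (h : (i, j) ∈ Δ) : embedHom Δ (tG Δ i j) = bigT i j := by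
  rw [tG, dif_pos h]
  exact PresentedGroup.toGroup.of _

lemma IsTriangulation.retractHom_bigT (hΔ : IsTriangulation Δ) {i j : Fin n} (h : i ≠ j) :
    hΔ.retractHom (bigT i j) = retractGen Δ i j := by
  rw [bigT, dif_pos h]
  exact PresentedGroup.toGroup.of _

lemma IsTriangulation.retractHom_comp_embedHom (hΔ : IsTriangulation Δ) :
    hΔ.retractHom.comp (embedHom Δ) = MonoidHom.id (TriGroup Δ) := by
  refine PresentedGroup.ext fun ⟨(i, j), h⟩ => ?_
  have hof : PresentedGroup.of ⟨(i, j), h⟩ = tG Δ i j := by rw [tG, dif_pos h]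
  rw [hof, MonoidHom.comp_apply, embedHom_tG h, hΔ.retractHom_bigT (hΔ.ne_of_mem h),
    retractGen_of_mem h, MonoidHom.id_apply]

theorem triangle_group_embeds_in_big_general (n : ℕ) (Δ : Set (Fin n × Fin n))
    (hΔ : IsTriangulation Δ) :
    ∃ jhat : TriGroup Δ →* BigTriGroup n,
      (∀ i j : Fin n, (i, j) ∈ Δ → jhat (tG Δ i j) = bigT i j) ∧
      (∃ π : BigTriGroup n →* TriGroup Δ,
        Function.Surjective π ∧ π.comp jhat = MonoidHom.id (TriGroup Δ)) ∧
      Function.Injective jhat := by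
  have hinv : Function.LeftInverse hΔ.retractHom (embedHom Δ) :=
    DFunLike.congr_fun hΔ.retractHom_comp_embedHom
  exact ⟨embedHom Δ, fun _ _ => embedHom_tG, ⟨hΔ.retractHom, hinv.surjective,
    hΔ.retractHom_comp_embedHom⟩, hinv.injective⟩

/-- The assignments `t_{ij} ↦ t_{ij}` define a homomorphism
`ĵ_Δ : 𝕋_Δ → 𝕋_n` which admits a surjective retraction `π_Δ : 𝕋_n → 𝕋_Δ`; in particular
`ĵ_Δ` is injective. -/
theorem triangle_group_embeds_in_big (n : ℕ) (hn : 3 ≤ n) (Δ : Set (Fin n × Fin n))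
    (hΔ : IsTriangulation Δ) :
    ∃ jhat : TriGroup Δ →* BigTriGroup n,
      (∀ i j : Fin n, (i, j) ∈ Δ → jhat (tG Δ i j) = bigT i j) ∧
      (∃ π : BigTriGroup n →* TriGroup Δ,
        Function.Surjective π ∧ π.comp jhat = MonoidHom.id (TriGroup Δ)) ∧
      Function.Injective jhat :=
  triangle_group_embeds_in_big_general n Δ hΔ

end NCPolygon
end
end
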